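/- For every positive integer r and real x ≠ 0, the (2r)-th order Gaussian-based kernel satisfies (-1)^r φ^{(2r-1)}(x) / (2^{r-1} (r-1)! x) = Σ_{s=0}^{r-1} ((-1)^s / (2^s s!)) φ^{(2s)}(x), where φ is the standard normal density and φ^{(k)} denotes its k-th derivative. -/
import Mathlib

open Real Finset Polynomial

lemma derivative_hermite_succ (n : ℕ) :
    derivative (hermite (n + 1)) = C ((n : ℤ) + 1) * hermite n := by
  induction n with
  | zero => simp [hermite_one]
  | succ n ih =>
    rw [hermite_succ (n+1), derivative_sub, derivative_mul, derivative_X, ih, derivative_mul,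
      derivative_C, hermite_succ n]
    have hc : (C ((n : ℤ) + 1 + 1) : Polynomial ℤ) = C ((n : ℤ) + 1) + 1 := by
      rw [C_add, C_1]
    push_cast
    rw [hc]
    ring

lemma hermite_recurrence (n : ℕ) (x : ℝ) :
    aeval x (hermite (n + 2)) =
      x * aeval x (hermite (n + 1)) - (n + 1) * aeval x (hermite n) := by
  rw [hermite_succ (n+1), derivative_hermite_succ]
  simp [mul_comm]

lemma key (r : ℕ) (x : ℝ) :
    aeval x (hermite (2 * r + 1)) =
      (-1 : ℝ) ^ r * 2 ^ r * (Nat.factorial r) * x *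
        ∑ s ∈ Finset.range (r + 1),
          ((-1 : ℝ) ^ s / (2 ^ s * Nat.factorial s)) * aeval x (hermite (2 * s)) := by
  induction r with
  | zero => simp [hermite_one]
  | succ r ih =>
    have h1 : 2 * (r + 1) + 1 = (2 * r + 1) + 2 := by ring
    have h2 : 2 * (r + 1) = (2 * r + 1) + 1 := by ring
    rw [Finset.sum_range_succ, h1, hermite_recurrence, h2]
    have hca : ((2 * r + 1 : ℕ) : ℝ) + 1 = 2 * (r + 1) := by push_cast; ring
    rw [hca, ih]
    have hfac : (Nat.factorial (r + 1) : ℝ) = (r + 1) * Nat.factorial r := by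
      rw [Nat.factorial_succ]; push_cast; ring
    have hfacne : (Nat.factorial r : ℝ) ≠ 0 := Nat.cast_ne_zero.2 (Nat.factorial_ne_zero _)
    rw [hfac]
    generalize (aeval x) (hermite (2 * r + 1 + 1)) = A
    generalize (∑ s ∈ Finset.range (r + 1),
        ((-1 : ℝ) ^ s / (2 ^ s * Nat.factorial s)) * aeval x (hermite (2 * s))) = S
    have hm : ((-1 : ℝ)) ^ (r * 2) = 1 := Even.neg_one_pow ⟨r, by ring⟩
    field_simp
    ring_nf
    rw [hm]
    ring

noncomputable def stdNormalPDF (x : ℝ) : ℝ := (Real.sqrt (2 * Real.pi))⁻¹ * Real.exp (-x ^ 2 / 2)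

lemma stdNormal_iteratedDeriv (n : ℕ) (x : ℝ) :
    iteratedDeriv n stdNormalPDF x =
      (Real.sqrt (2 * Real.pi))⁻¹ *
        ((-1 : ℝ) ^ n * aeval x (hermite n) * Real.exp (-(x ^ 2 / 2))) := by
  have hfun : stdNormalPDF = fun y => (Real.sqrt (2 * Real.pi))⁻¹ * Real.exp (-(y ^ 2 / 2)) := by
    funext y; simp [stdNormalPDF, neg_div]
  have hiter : ∀ m, deriv^[m] (fun y : ℝ => (Real.sqrt (2 * Real.pi))⁻¹ * Real.exp (-(y ^ 2 / 2)))
      = fun y => (Real.sqrt (2 * Real.pi))⁻¹ * deriv^[m] (fun z : ℝ => Real.exp (-(z ^ 2 / 2))) y := by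
    intro m
    induction m with
    | zero => rfl
    | succ m ih =>
      rw [Function.iterate_succ_apply', ih, deriv_const_mul_field',
        Function.iterate_succ_apply']
  rw [hfun, iteratedDeriv_eq_iterate, hiter n]
  simp only [Polynomial.deriv_gaussian_eq_hermite_mul_gaussian]

theorem gaussian_kernel_two_forms (r : ℕ) (hr : 1 ≤ r) (x : ℝ) (hx : x ≠ 0) :
    (-1 : ℝ) ^ r * iteratedDeriv (2 * r - 1) stdNormalPDF x /
      (2 ^ (r - 1) * (Nat.factorial (r - 1)) * x)
    = ∑ s ∈ Finset.range r,
        ((-1 : ℝ) ^ s / (2 ^ s * Nat.factorial s)) * iteratedDeriv (2 * s) stdNormalPDF x := by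
  obtain ⟨k, rfl⟩ := Nat.exists_eq_add_of_le hr
  have e1 : 2 * (1 + k) - 1 = 2 * k + 1 := by omega
  have e2 : 1 + k - 1 = k := by omega
  have e3 : 1 + k = k + 1 := by omega
  have hsum : ∑ s ∈ Finset.range (1 + k),
      ((-1 : ℝ) ^ s / (2 ^ s * Nat.factorial s)) * iteratedDeriv (2 * s) stdNormalPDF x
      = (Real.sqrt (2 * Real.pi))⁻¹ * Real.exp (-(x ^ 2 / 2)) *
        ∑ s ∈ Finset.range (k + 1),
          ((-1 : ℝ) ^ s / (2 ^ s * Nat.factorial s)) * aeval x (hermite (2 * s)) := by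
    rw [e3, Finset.mul_sum]
    refine Finset.sum_congr rfl fun s _ => ?_
    rw [stdNormal_iteratedDeriv]
    have hes : ((-1 : ℝ)) ^ (2 * s) = 1 := Even.neg_one_pow ⟨s, by ring⟩
    rw [hes]; ring
  rw [hsum, e1, e2, stdNormal_iteratedDeriv, key k x]
  have ho : ((-1 : ℝ)) ^ (2 * k + 1) = -1 := Odd.neg_one_pow ⟨k, by ring⟩
  rw [ho]
  generalize (∑ s ∈ Finset.range (k + 1),
      ((-1 : ℝ) ^ s / (2 ^ s * Nat.factorial s)) * aeval x (hermite (2 * s))) = S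
  have h1 : (Real.sqrt (2 * Real.pi)) ≠ 0 := by positivity
  have h2 : (Nat.factorial k : ℝ) ≠ 0 := Nat.cast_ne_zero.2 (Nat.factorial_ne_zero _)
  have hm : ((-1 : ℝ)) ^ (k * 2) = 1 := Even.neg_one_pow ⟨k, by ring⟩
  field_simp
  ring_nf
  rw [hm]
  ring
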